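/- arXiv:2007.03940 — 8 statements merged into one kernel-verified Lean document; each statement's English description precedes it below -/
import Mathlib

section
/- Adjustment for direct causes: let a joint distribution factorize according to a causal DAG given by parent sets, fix a coordinate i, a value a of the i-th variable, and a coordinate k with k ≠ i and k not a parent of i. Then for every value b, the interventional probability P(X_k = b | do(X_i = a)), defined as the sum over all x with x_i = a and x_k = b of the truncated product ∏_{j ≠ i} q_j(x restricted to pa(j), x_j), equals Σ_w P(PA_i = w) · P(X_k = b | X_i = a, PA_i = w), where the sum ranges over all assignments w of values to the parents of i, and the probabilities on the right are marginals and ratios of marginals of the joint distribution. -/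
open scoped BigOperators Classical

noncomputable def dagJoint {n : ℕ} {α : Fin n → Type*} [∀ i, Fintype (α i)]
    (pa : Fin n → Finset (Fin n))
    (q : ∀ j : Fin n, (∀ t : {t // t ∈ pa j}, α t.1) → α j → ℝ)
    (x : ∀ i, α i) : ℝ :=
  ∏ j : Fin n, q j (fun t => x t.1) (x j)

/-!
The truncated product is the factorization of the intervened model, in which `q i` is replaced by
the point mass at `a`. Summing out the coordinates `j ≥ i` from the largest index down removes
their factors, because each `q j` sums to one and no factor of smaller index reads `x j`; so an
event on the coordinates `< i`, such as `PA i = w`, has the same probability in both models.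
Since `p(x) = q i w a * (truncated product)` whenever `x i = a` and the parents of `i` take the
value `w`, both the numerator and the denominator of the conditional carry the factor `q i w a`,
which cancels.
-/

open Function Finset

section SumOut

variable {ι : Type*} [Fintype ι] [DecidableEq ι] {α : ι → Type*} [∀ i, Fintype (α i)]

theorem sum_sum_update_eq_card_mul (m : ι) (h : (∀ j, α j) → ℝ) :
    ∑ y : α m, ∑ x, h (update x m y) = Fintype.card (α m) * ∑ x, h x := by
  have hinv : Involutive fun p : (∀ j, α j) × α m => (update p.1 m p.2, p.1 m) := by
    rintro ⟨x, y⟩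
    simp
  rw [sum_comm, ← Fintype.sum_prod_type' (fun x y => h (update x m y)),
    Fintype.sum_equiv hinv.toPerm (fun p => h (update p.1 m p.2)) (fun p => h p.1) fun _ => rfl,
    Fintype.sum_prod_type' (fun x (_ : α m) => h x), mul_sum]
  simp

theorem card_mul_sum_mul_eq_sum (m : ι) {f g : (∀ j, α j) → ℝ} (hf : DependsOn f {m}ᶜ)
    (hg : ∀ x, ∑ y, g (update x m y) = 1) :
    Fintype.card (α m) * ∑ x, g x * f x = ∑ x, f x := by
  have hfm : ∀ x y, f (update x m y) = f x := fun x y =>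
    hf fun j hj => update_of_ne hj _ _
  rw [← sum_sum_update_eq_card_mul, sum_comm]
  refine sum_congr rfl fun x _ => ?_
  simp only [hfm, ← sum_mul, hg, one_mul]

end SumOut

section Dag

variable {n : ℕ} {α : Fin n → Type*} {pa : Fin n → Finset (Fin n)}

def dagFactor (q : ∀ j : Fin n, (∀ t : {t // t ∈ pa j}, α t.1) → α j → ℝ) (j : Fin n)
    (x : ∀ i, α i) : ℝ :=
  q j (fun t => x t.1) (x j)

theorem dependsOn_dagFactor (q : ∀ j : Fin n, (∀ t : {t // t ∈ pa j}, α t.1) → α j → ℝ)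
    (j : Fin n) : DependsOn (dagFactor q j) (insert j (pa j : Set (Fin n))) := by
  intro x y h
  have hpar : (fun t : {t // t ∈ pa j} => x t.1) = fun t : {t // t ∈ pa j} => y t.1 :=
    funext fun t => h _ (Set.mem_insert_of_mem _ t.2)
  rw [dagFactor, dagFactor, hpar, h j (Set.mem_insert _ _)]

theorem sum_dagFactor_update [∀ i, Fintype (α i)] (hpa : ∀ i j : Fin n, i ∈ pa j → i < j)
    {q : ∀ j : Fin n, (∀ t : {t // t ∈ pa j}, α t.1) → α j → ℝ} {m : Fin n}
    (hq1 : ∀ w, ∑ a, q m w a = 1) (x : ∀ i, α i) :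
    ∑ y, dagFactor q m (update x m y) = 1 := by
  have hpar : ∀ y, (fun t : {t // t ∈ pa m} => update x m y t.1) =
      fun t : {t // t ∈ pa m} => x t.1 :=
    fun y => funext fun t => update_of_ne (hpa _ _ t.2).ne _ _
  simp only [dagFactor, hpar, update_self, hq1]

theorem prod_card_mul_sum_mul_prod_dagFactor [∀ i, Fintype (α i)]
    (hpa : ∀ i j : Fin n, i ∈ pa j → i < j)
    (q : ∀ j : Fin n, (∀ t : {t // t ∈ pa j}, α t.1) → α j → ℝ) (S : Finset (Fin n))
    (hq1 : ∀ j ∈ S, ∀ w, ∑ a, q j w a = 1) {f : (∀ i, α i) → ℝ} (hf : DependsOn f (↑S)ᶜ) :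
    (∏ j ∈ S, (Fintype.card (α j) : ℝ)) * ∑ x, f x * ∏ j ∈ S, dagFactor q j x = ∑ x, f x := by
  induction S using Finset.induction_on_max with
  | empty => simp
  | insert m s hlt ih =>
    have hms : m ∉ s := fun h => lt_irrefl _ (hlt m h)
    have hF : DependsOn (fun x => f x * ∏ j ∈ s, dagFactor q j x) {m}ᶜ := by
      intro x y hxy
      have hfxy : f x = f y :=
        hf fun t ht => hxy t fun htm => ht (by simp [Set.mem_singleton_iff.mp htm])
      have hlow : ∀ j ∈ s, ∀ t ∈ insert j (pa j : Set (Fin n)), t ≠ m := by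
        rintro j hj t (rfl | ht)
        · exact (hlt t hj).ne
        · exact ((hpa t j ht).trans (hlt j hj)).ne
      simp only
      rw [hfxy, prod_congr rfl fun j hj =>
        dependsOn_dagFactor q j fun t ht => hxy t (hlow j hj t ht)]
    have hsum : ∑ x, f x * ∏ j ∈ insert m s, dagFactor q j x
        = ∑ x, dagFactor q m x * (f x * ∏ j ∈ s, dagFactor q j x) :=
      sum_congr rfl fun x _ => by rw [prod_insert hms]; ring
    rw [prod_insert hms, hsum, mul_comm (Fintype.card (α m) : ℝ), mul_assoc,
      card_mul_sum_mul_eq_sum m hF (sum_dagFactor_update hpa (hq1 m (mem_insert_self m s)))]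
    exact ih (fun j hj => hq1 j (mem_insert_of_mem hj))
      (hf.mono (Set.compl_subset_compl.mpr (by simp)))

theorem sum_mul_dagJoint_eq_of_forall_lt_eq [∀ i, Fintype (α i)] [∀ i, Nonempty (α i)]
    (hpa : ∀ i j : Fin n, i ∈ pa j → i < j)
    {q q' : ∀ j : Fin n, (∀ t : {t // t ∈ pa j}, α t.1) → α j → ℝ}
    (hq1 : ∀ j w, ∑ a, q j w a = 1) (hq1' : ∀ j w, ∑ a, q' j w a = 1)
    (i : Fin n) (hqq' : ∀ j < i, q j = q' j) {f : (∀ i, α i) → ℝ}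
    (hf : DependsOn f (Set.Iio i)) :
    ∑ x, f x * dagJoint pa q x = ∑ x, f x * dagJoint pa q' x := by
  have hreduce : ∀ q : ∀ j : Fin n, (∀ t : {t // t ∈ pa j}, α t.1) → α j → ℝ,
      (∀ j w, ∑ a, q j w a = 1) →
      (∏ j with ¬j < i, (Fintype.card (α j) : ℝ)) * ∑ x, f x * dagJoint pa q x =
        ∑ x, f x * ∏ j with j < i, dagFactor q j x := by
    intro q hq1
    have hsplit : ∀ x, f x * dagJoint pa q x =
        (f x * ∏ j with j < i, dagFactor q j x) * ∏ j with ¬j < i, dagFactor q j x := by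
      intro x
      rw [mul_assoc, prod_filter_mul_prod_filter_not]
      rfl
    simp only [hsplit]
    refine prod_card_mul_sum_mul_prod_dagFactor hpa q _ (fun j _ => hq1 j) ?_
    intro x y hxy
    have hlow : ∀ t < i, x t = y t := fun t ht => hxy t (by simp [ht])
    simp only
    rw [hf fun t ht => hlow t ht, prod_congr rfl fun j hj =>
      dependsOn_dagFactor q j fun t ht => hlow t ?_]
    simp only [mem_filter, mem_univ, true_and] at hj
    rcases ht with rfl | ht
    · exact hj
    · exact (hpa t j ht).trans hj
  have hcard : (∏ j with ¬j < i, (Fintype.card (α j) : ℝ)) ≠ 0 :=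
    prod_ne_zero_iff.mpr fun j _ => Nat.cast_ne_zero.mpr Fintype.card_ne_zero
  refine mul_left_cancel₀ hcard ((hreduce q hq1).trans ?_ |>.trans (hreduce q' hq1').symm)
  refine sum_congr rfl fun x _ => ?_
  rw [prod_congr rfl fun j hj => by rw [dagFactor, hqq' j (by simpa using hj)]]
  rfl

noncomputable def intervene (q : ∀ j : Fin n, (∀ t : {t // t ∈ pa j}, α t.1) → α j → ℝ) (i : Fin n)
    (a : α i) : ∀ j : Fin n, (∀ t : {t // t ∈ pa j}, α t.1) → α j → ℝ :=
  update q i fun _ y => if y = a then 1 else 0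

theorem sum_intervene_eq_one [∀ i, Fintype (α i)]
    {q : ∀ j : Fin n, (∀ t : {t // t ∈ pa j}, α t.1) → α j → ℝ}
    (hq1 : ∀ j w, ∑ a, q j w a = 1) (i : Fin n) (a : α i) (j : Fin n)
    (w : ∀ t : {t // t ∈ pa j}, α t.1) : ∑ y, intervene q i a j w y = 1 := by
  by_cases hji : j = i
  · subst hji
    simp [intervene]
  · simp [intervene, update_of_ne hji, hq1]

theorem dagJoint_intervene [∀ i, Fintype (α i)]
    (q : ∀ j : Fin n, (∀ t : {t // t ∈ pa j}, α t.1) → α j → ℝ) (i : Fin n) (a : α i)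
    (x : ∀ j, α j) :
    dagJoint pa (intervene q i a) x =
      if x i = a then ∏ j ∈ univ.erase i, q j (fun t => x t.1) (x j) else 0 := by
  rw [dagJoint, ← mul_prod_erase univ _ (mem_univ i),
    prod_congr rfl fun j hj => by rw [intervene, update_of_ne (ne_of_mem_erase hj)]]
  simp [intervene]

theorem dagJoint_eq_mul_prod_erase [∀ i, Fintype (α i)]
    (q : ∀ j : Fin n, (∀ t : {t // t ∈ pa j}, α t.1) → α j → ℝ) {i : Fin n} {a : α i}
    {w : ∀ t : {t // t ∈ pa i}, α t.1} {x : ∀ j, α j} (hxi : x i = a)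
    (hxw : ∀ t : {t // t ∈ pa i}, x t.1 = w t) :
    dagJoint pa q x = q i w a * ∏ j ∈ univ.erase i, q j (fun t => x t.1) (x j) := by
  rw [dagJoint, ← mul_prod_erase univ _ (mem_univ i), ← hxi, ← funext hxw]

theorem sum_truncated_eq_sum_parents [∀ i, Fintype (α i)] [∀ i, Nonempty (α i)]
    (hpa : ∀ i j : Fin n, i ∈ pa j → i < j)
    {q : ∀ j : Fin n, (∀ t : {t // t ∈ pa j}, α t.1) → α j → ℝ}
    (hq1 : ∀ j w, ∑ a, q j w a = 1) (i : Fin n) (a : α i) (w : ∀ t : {t // t ∈ pa i}, α t.1) :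
    (∑ x : ∀ j, α j, if x i = a ∧ (∀ t : {t // t ∈ pa i}, x t.1 = w t) then
        ∏ j ∈ univ.erase i, q j (fun t => x t.1) (x j) else 0) =
      ∑ x : ∀ j, α j, if (∀ t : {t // t ∈ pa i}, x t.1 = w t) then dagJoint pa q x else 0 := by
  have hparents : DependsOn (fun x : ∀ j, α j =>
      if (∀ t : {t // t ∈ pa i}, x t.1 = w t) then (1 : ℝ) else 0) (Set.Iio i) := by
    intro x y hxy
    simp only [hxy _ (hpa _ _ (Subtype.prop _))]
  have h := sum_mul_dagJoint_eq_of_forall_lt_eq hpa hq1 (sum_intervene_eq_one hq1 i a) i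
    (fun j hj => (update_of_ne hj.ne _ _).symm) hparents
  simp only [boole_mul, dagJoint_intervene] at h
  rw [h]
  exact sum_congr rfl fun x _ => by split_ifs <;> tauto

theorem sum_ite_dagJoint_eq_mul [∀ i, Fintype (α i)]
    (q : ∀ j : Fin n, (∀ t : {t // t ∈ pa j}, α t.1) → α j → ℝ) (P : (∀ j, α j) → Prop)
    (i : Fin n) (a : α i) (w : ∀ t : {t // t ∈ pa i}, α t.1) :
    (∑ x : ∀ j, α j, if P x ∧ x i = a ∧ (∀ t : {t // t ∈ pa i}, x t.1 = w t) then
        dagJoint pa q x else 0) =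
      q i w a * ∑ x : ∀ j, α j, if P x ∧ x i = a ∧ (∀ t : {t // t ∈ pa i}, x t.1 = w t) then
        ∏ j ∈ univ.erase i, q j (fun t => x t.1) (x j) else 0 := by
  rw [mul_sum]
  refine sum_congr rfl fun x _ => ?_
  split_ifs with h
  · exact dagJoint_eq_mul_prod_erase q h.2.1 h.2.2
  · rw [mul_zero]

theorem exists_eq_and_parents_eq [∀ i, Nonempty (α i)] (hpa : ∀ i j : Fin n, i ∈ pa j → i < j)
    (i : Fin n) (a : α i) (w : ∀ t : {t // t ∈ pa i}, α t.1) :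
    ∃ x : ∀ j, α j, x i = a ∧ ∀ t : {t // t ∈ pa i}, x t.1 = w t := by
  refine ⟨update (fun j => if h : j ∈ pa i then w ⟨j, h⟩ else Classical.arbitrary (α j)) i a,
    update_self _ _ _, fun t => ?_⟩
  rw [update_of_ne (hpa t.1 i t.2).ne]
  simp [t.2]

end Dag

theorem adjustment_for_direct_causes_general {n : ℕ} {α : Fin n → Type*}
    [∀ i, Fintype (α i)] [∀ i, Nonempty (α i)]
    (pa : Fin n → Finset (Fin n))
    (hpa : ∀ i j : Fin n, i ∈ pa j → i < j)
    (q : ∀ j : Fin n, (∀ t : {t // t ∈ pa j}, α t.1) → α j → ℝ)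
    (hq1 : ∀ j w, ∑ a : α j, q j w a = 1)
    (hpos : ∀ x : ∀ i, α i, 0 < dagJoint pa q x)
    (i : Fin n) (a : α i) (k : Fin n) (b : α k) :
    (∑ x : ∀ j, α j, if x i = a ∧ x k = b then
        ∏ j ∈ Finset.univ.erase i, q j (fun t => x t.1) (x j) else 0) =
    ∑ w : ∀ t : {t // t ∈ pa i}, α t.1,
      (∑ x : ∀ j, α j, if (∀ t : {t // t ∈ pa i}, x t.1 = w t) then dagJoint pa q x else 0) *
      ((∑ x : ∀ j, α j, if x k = b ∧ x i = a ∧ (∀ t : {t // t ∈ pa i}, x t.1 = w t) then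
            dagJoint pa q x else 0) /
       (∑ x : ∀ j, α j, if x i = a ∧ (∀ t : {t // t ∈ pa i}, x t.1 = w t) then
            dagJoint pa q x else 0)) := by
  have hfiber : ∀ x : ∀ j, α j, (if x i = a ∧ x k = b then
      ∏ j ∈ univ.erase i, q j (fun t => x t.1) (x j) else 0) =
      ∑ w : ∀ t : {t // t ∈ pa i}, α t.1,
        if x k = b ∧ x i = a ∧ (∀ t : {t // t ∈ pa i}, x t.1 = w t) then
          ∏ j ∈ univ.erase i, q j (fun t => x t.1) (x j) else 0 := by
    intro x
    rw [Fintype.sum_eq_single (fun t : {t // t ∈ pa i} => x t.1) fun w hw =>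
      if_neg fun h => hw (funext fun t => (h.2.2 t).symm)]
    simp [and_comm]
  rw [sum_congr rfl fun x _ => hfiber x, sum_comm]
  refine sum_congr rfl fun w _ => ?_
  obtain ⟨x₀, hx₀i, hx₀w⟩ := exists_eq_and_parents_eq hpa i a w
  have hq : q i w a ≠ 0 := by
    have h := hpos x₀
    rw [dagJoint_eq_mul_prod_erase q hx₀i hx₀w] at h
    exact left_ne_zero_of_mul h.ne'
  have hN : 0 < ∑ x : ∀ j, α j,
      if (∀ t : {t // t ∈ pa i}, x t.1 = w t) then dagJoint pa q x else 0 :=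
    sum_pos' (fun x _ => by split_ifs; exacts [(hpos x).le, le_rfl])
      ⟨x₀, mem_univ _, by rw [if_pos hx₀w]; exact hpos x₀⟩
  have hmarg := sum_ite_dagJoint_eq_mul q (fun _ => True) i a w
  simp only [true_and] at hmarg
  rw [hmarg, sum_truncated_eq_sum_parents hpa hq1, sum_ite_dagJoint_eq_mul q (fun x => x k = b),
    mul_div_mul_left _ _ hq, mul_div_cancel₀ _ hN.ne']

/-- Adjusting for direct causes: if the joint distribution factorizes according to a
causal DAG, `i` is a coordinate, `a` a value of `X i`, and `k ≠ i` a coordinate that is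
not a parent of `i`, then the interventional probability `P(X k = b | do(X i = a))`
(defined by the truncated factorization) equals
`Σ_w P(PA i = w) * P(X k = b | X i = a, PA i = w)`. -/
theorem adjustment_for_direct_causes {n : ℕ} {α : Fin n → Type*}
    [∀ i, Fintype (α i)] [∀ i, Nonempty (α i)]
    (pa : Fin n → Finset (Fin n))
    (hpa : ∀ i j : Fin n, i ∈ pa j → i < j)
    (q : ∀ j : Fin n, (∀ t : {t // t ∈ pa j}, α t.1) → α j → ℝ)
    (hq0 : ∀ j w a, 0 ≤ q j w a)
    (hq1 : ∀ j w, ∑ a : α j, q j w a = 1)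
    (hpos : ∀ x : ∀ i, α i, 0 < dagJoint pa q x)
    (i : Fin n) (a : α i) (k : Fin n) (hki : k ≠ i) (hkpa : k ∉ pa i) (b : α k) :
    (∑ x : ∀ j, α j, if x i = a ∧ x k = b then
        ∏ j ∈ Finset.univ.erase i, q j (fun t => x t.1) (x j) else 0) =
    ∑ w : ∀ t : {t // t ∈ pa i}, α t.1,
      (∑ x : ∀ j, α j, if (∀ t : {t // t ∈ pa i}, x t.1 = w t) then dagJoint pa q x else 0) *
      ((∑ x : ∀ j, α j, if x k = b ∧ x i = a ∧ (∀ t : {t // t ∈ pa i}, x t.1 = w t) then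
            dagJoint pa q x else 0) /
       (∑ x : ∀ j, α j, if x i = a ∧ (∀ t : {t // t ∈ pa i}, x t.1 = w t) then
            dagJoint pa q x else 0)) :=
  adjustment_for_direct_causes_general pa hpa q hq1 hpos i a k b
end

section
/- Back-door adjustment for the graph U → Z → X → Y with confounder U → Y (U unobserved): for every x with P(X = x, Z = z) > 0 for all z, and every y, the interventional probability P(y | do(x)) := Σ_{u,z} qU(u) · qZ(u, z) · qY(x, u, y) equals Σ_z P(Z = z) · P(Y = y | X = x, Z = z), where the probabilities on the right are marginals and ratios of marginals of the joint distribution over the observed variables. -/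
/-! Summing out `Y` and then `X` against their normalized kernels gives `P(Z = z) = Σ_u qU u * qZ u z`
and `P(X = x, Z = z) = qX z x * P(Z = z)`. The propensity factor `qX z x` also divides
`P(X = x, Z = z, Y = y)`, so it cancels in `P(Y = y | X = x, Z = z)`, and the `z`-th term of the
adjustment formula is exactly `Σ_u qU u * qZ u z * qY x u y`. -/

open Finset

theorem sum_mul_kernel_eq {ι : Type*} [Fintype ι] {k : ι → ℝ} (hk : ∑ i, k i = 1) (c : ℝ) :
    ∑ i, c * k i = c := by
  rw [← mul_sum, hk, mul_one]

section Marginals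

variable {U Z X Y : Type*} [Fintype U]
  (qU : U → ℝ) (qZ : U → Z → ℝ) (qX : Z → X → ℝ) (qY : X → U → Y → ℝ)

theorem marginal_XZ_eq [Fintype Y] (hYsum : ∀ x u, ∑ y, qY x u y = 1) (z : Z) (x : X) :
    ∑ u, ∑ y', qU u * qZ u z * qX z x * qY x u y' = qX z x * ∑ u, qU u * qZ u z := by
  simp only [sum_mul_kernel_eq (hYsum x _), mul_sum]
  exact sum_congr rfl fun u _ => mul_comm _ _

theorem marginal_Z_eq [Fintype X] [Fintype Y] (hXsum : ∀ z, ∑ x, qX z x = 1)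
    (hYsum : ∀ x u, ∑ y, qY x u y = 1) (z : Z) :
    ∑ u, ∑ x', ∑ y', qU u * qZ u z * qX z x' * qY x' u y' = ∑ u, qU u * qZ u z := by
  simp only [sum_mul_kernel_eq (hYsum _ _), sum_mul_kernel_eq (hXsum z)]

theorem joint_XZY_eq (z : Z) (x : X) (y : Y) :
    ∑ u, qU u * qZ u z * qX z x * qY x u y = qX z x * ∑ u, qU u * qZ u z * qY x u y := by
  rw [mul_sum]
  exact sum_congr rfl fun u _ => by ring

end Marginals

theorem backdoor_adjustment_general
    {U Z X Y : Type*} [Fintype U] [Fintype Z] [Fintype X] [Fintype Y]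
    (qU : U → ℝ) (qZ : U → Z → ℝ) (qX : Z → X → ℝ) (qY : X → U → Y → ℝ)
    (hXsum : ∀ z, ∑ x, qX z x = 1)
    (hYsum : ∀ x u, ∑ y, qY x u y = 1)
    (x : X) (hx : ∀ z, 0 < ∑ u, ∑ y', qU u * qZ u z * qX z x * qY x u y')
    (y : Y) :
    (∑ u, ∑ z, qU u * qZ u z * qY x u y) =
      ∑ z, (∑ u, ∑ x', ∑ y', qU u * qZ u z * qX z x' * qY x' u y') *
        ((∑ u, qU u * qZ u z * qX z x * qY x u y) /
         (∑ u, ∑ y', qU u * qZ u z * qX z x * qY x u y')) := by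
  rw [sum_comm]
  refine sum_congr rfl fun z _ => ?_
  have hpos := hx z
  rw [marginal_XZ_eq qU qZ qX qY hYsum] at hpos ⊢
  obtain ⟨hqX, hpZ⟩ := mul_ne_zero_iff.mp hpos.ne'
  rw [marginal_Z_eq qU qZ qX qY hXsum hYsum, joint_XZY_eq, mul_div_mul_left _ _ hqX,
    mul_div_cancel₀ _ hpZ]

/-- Back-door adjustment for the graph `U → Z → X → Y` with confounder `U → Y`
(`U` unobserved), joint distribution `p(u,z,x,y) = qU u * qZ u z * qX z x * qY x u y`.
If `P(X = x, Z = z) > 0` for all `z`, then the interventional probability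
`P(y | do(x)) = Σ_{u,z} qU u * qZ u z * qY x u y` equals the back-door adjustment
`Σ_z P(Z = z) * P(Y = y | X = x, Z = z)`. -/
theorem backdoor_adjustment
    {U Z X Y : Type*} [Fintype U] [Fintype Z] [Fintype X] [Fintype Y]
    [Nonempty U] [Nonempty Z] [Nonempty X] [Nonempty Y]
    (qU : U → ℝ) (qZ : U → Z → ℝ) (qX : Z → X → ℝ) (qY : X → U → Y → ℝ)
    (hqU : ∀ u, 0 ≤ qU u) (hqZ : ∀ u z, 0 ≤ qZ u z)
    (hqX : ∀ z x, 0 ≤ qX z x) (hqY : ∀ x u y, 0 ≤ qY x u y)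
    (hUsum : ∑ u, qU u = 1)
    (hZsum : ∀ u, ∑ z, qZ u z = 1)
    (hXsum : ∀ z, ∑ x, qX z x = 1)
    (hYsum : ∀ x u, ∑ y, qY x u y = 1)
    (x : X) (hx : ∀ z, 0 < ∑ u, ∑ y', qU u * qZ u z * qX z x * qY x u y')
    (y : Y) :
    (∑ u, ∑ z, qU u * qZ u z * qY x u y) =
      ∑ z, (∑ u, ∑ x', ∑ y', qU u * qZ u z * qX z x' * qY x' u y') *
        ((∑ u, qU u * qZ u z * qX z x * qY x u y) /
         (∑ u, ∑ y', qU u * qZ u z * qX z x * qY x u y')) :=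
  backdoor_adjustment_general qU qZ qX qY hXsum hYsum x hx y
end

section
/- Front-door formula: in the graph U → X → Z → Y with confounder U → Y (U unobserved), assuming P(X = x', Z = z) > 0 for all x', z, one has for all x, y: P(y | do(x)) = Σ_z P(Z = z | X = x) · Σ_{x'} P(Y = y | X = x', Z = z) · P(X = x'), where the probabilities on the right are marginals and ratios of marginals of the joint distribution over the observed variables X, Z, Y. -/
/-!
The intervention `do(x)` only replaces `qX`, so `P(y | do(x)) = Σ_z qZ x z · P(y | do(z))` with
`P(y | do(z)) = Σ_u qU u · qY z u y`. Both factors are identified from observational data: summing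
out `y` shows `P(z | x) = qZ x z`, and since `X` blocks the back-door path `Z ← X ← U → Y`,
`P(y | x', z) · P(x') = Σ_u qU u · qX u x' · qY z u y`, which summed over `x'` is
`P(y | do(z))`.
-/

namespace FrontDoor

variable {U X Z Y : Type*}
  (qU : U → ℝ) (qX : U → X → ℝ) (qZ : X → Z → ℝ) (qY : Z → U → Y → ℝ)

theorem sum_joint_over_y [Fintype U] [Fintype Y] (hYsum : ∀ z u, ∑ y, qY z u y = 1)
    (x : X) (z : Z) :
    ∑ u, ∑ y, qU u * qX u x * qZ x z * qY z u y = (∑ u, qU u * qX u x) * qZ x z := by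
  simp only [← Finset.mul_sum, hYsum, mul_one, Finset.sum_mul]

theorem sum_joint_over_zy [Fintype U] [Fintype Z] [Fintype Y] (hZsum : ∀ x, ∑ z, qZ x z = 1)
    (hYsum : ∀ z u, ∑ y, qY z u y = 1) (x : X) :
    ∑ u, ∑ z, ∑ y, qU u * qX u x * qZ x z * qY z u y = ∑ u, qU u * qX u x := by
  simp only [← Finset.mul_sum, hYsum, mul_one, hZsum]

theorem cond_z_given_x [Fintype U] [Fintype Z] [Fintype Y] (hZsum : ∀ x, ∑ z, qZ x z = 1)
    (hYsum : ∀ z u, ∑ y, qY z u y = 1) (x : X) (z : Z)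
    (hxz : ∑ u, ∑ y, qU u * qX u x * qZ x z * qY z u y ≠ 0) :
    (∑ u, ∑ y, qU u * qX u x * qZ x z * qY z u y) /
        (∑ u, ∑ z', ∑ y, qU u * qX u x * qZ x z' * qY z' u y) = qZ x z := by
  rw [sum_joint_over_y qU qX qZ qY hYsum] at hxz ⊢
  rw [sum_joint_over_zy qU qX qZ qY hZsum hYsum,
    mul_div_cancel_left₀ _ (left_ne_zero_of_mul hxz)]

theorem cond_y_given_xz_mul_marginal_x [Fintype U] [Fintype Z] [Fintype Y]
    (hZsum : ∀ x, ∑ z, qZ x z = 1) (hYsum : ∀ z u, ∑ y, qY z u y = 1)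
    (x : X) (z : Z) (y : Y)
    (hxz : ∑ u, ∑ y, qU u * qX u x * qZ x z * qY z u y ≠ 0) :
    (∑ u, qU u * qX u x * qZ x z * qY z u y) / (∑ u, ∑ y, qU u * qX u x * qZ x z * qY z u y) *
        (∑ u, ∑ z', ∑ y, qU u * qX u x * qZ x z' * qY z' u y) =
      ∑ u, qU u * qX u x * qY z u y := by
  rw [sum_joint_over_y qU qX qZ qY hYsum] at hxz ⊢
  rw [sum_joint_over_zy qU qX qZ qY hZsum hYsum]
  have hfactor : ∑ u, qU u * qX u x * qZ x z * qY z u y =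
      qZ x z * ∑ u, qU u * qX u x * qY z u y := by
    rw [Finset.mul_sum]
    exact Finset.sum_congr rfl fun u _ => by ring
  rw [hfactor]
  field_simp [left_ne_zero_of_mul hxz, right_ne_zero_of_mul hxz]

theorem backdoor_adjustment [Fintype U] [Fintype X] [Fintype Z] [Fintype Y]
    (hXsum : ∀ u, ∑ x, qX u x = 1) (hZsum : ∀ x, ∑ z, qZ x z = 1)
    (hYsum : ∀ z u, ∑ y, qY z u y = 1) (z : Z) (y : Y)
    (hxz : ∀ x, ∑ u, ∑ y, qU u * qX u x * qZ x z * qY z u y ≠ 0) :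
    ∑ x, (∑ u, qU u * qX u x * qZ x z * qY z u y) /
        (∑ u, ∑ y, qU u * qX u x * qZ x z * qY z u y) *
        (∑ u, ∑ z', ∑ y, qU u * qX u x * qZ x z' * qY z' u y) =
      ∑ u, qU u * qY z u y := by
  simp_rw [cond_y_given_xz_mul_marginal_x qU qX qZ qY hZsum hYsum _ z y (hxz _)]
  rw [Finset.sum_comm]
  refine Finset.sum_congr rfl fun u _ => ?_
  simp only [← Finset.sum_mul, ← Finset.mul_sum, hXsum, mul_one]

theorem interventional_eq_sum_qZ_mul [Fintype U] [Fintype Z] (x : X) (y : Y) :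
    ∑ z, ∑ u, qU u * qZ x z * qY z u y = ∑ z, qZ x z * ∑ u, qU u * qY z u y := by
  simp only [Finset.mul_sum]
  exact Finset.sum_congr rfl fun z _ => Finset.sum_congr rfl fun u _ => by ring

end FrontDoor

open FrontDoor in
theorem front_door_formula_general
    {U X Z Y : Type*} [Fintype U] [Fintype X] [Fintype Z] [Fintype Y]
    (qU : U → ℝ) (qX : U → X → ℝ) (qZ : X → Z → ℝ) (qY : Z → U → Y → ℝ)
    (hXsum : ∀ u, ∑ x, qX u x = 1)
    (hZsum : ∀ x, ∑ z, qZ x z = 1)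
    (hYsum : ∀ z u, ∑ y, qY z u y = 1)
    (hpos : ∀ (x' : X) (z : Z), 0 < ∑ u, ∑ y', qU u * qX u x' * qZ x' z * qY z u y')
    (x : X) (y : Y) :
    (∑ z, ∑ u, qU u * qZ x z * qY z u y) =
      ∑ z, ((∑ u, ∑ y', qU u * qX u x * qZ x z * qY z u y') /
              (∑ u, ∑ z', ∑ y', qU u * qX u x * qZ x z' * qY z' u y')) *
        ∑ x', ((∑ u, qU u * qX u x' * qZ x' z * qY z u y) /
                 (∑ u, ∑ y', qU u * qX u x' * qZ x' z * qY z u y')) *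
          (∑ u, ∑ z', ∑ y', qU u * qX u x' * qZ x' z' * qY z' u y') := by
  rw [interventional_eq_sum_qZ_mul]
  refine Finset.sum_congr rfl fun z _ => ?_
  rw [cond_z_given_x qU qX qZ qY hZsum hYsum x z (hpos x z).ne',
    backdoor_adjustment qU qX qZ qY hXsum hZsum hYsum z y fun x' => (hpos x' z).ne']

/-- Front-door formula for the graph `U → X → Z → Y` with confounder `U → Y`
(`U` unobserved), joint distribution `p(u,x,z,y) = qU u * qX u x * qZ x z * qY z u y`.
Assuming `P(X = x', Z = z) > 0` for all `x'`, `z`, the interventional probability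
`P(y | do(x)) = Σ_z Σ_u qU u * qZ x z * qY z u y` equals
`Σ_z P(Z = z | X = x) * Σ_{x'} P(Y = y | X = x', Z = z) * P(X = x')`. -/
theorem front_door_formula
    {U X Z Y : Type*} [Fintype U] [Fintype X] [Fintype Z] [Fintype Y]
    [Nonempty U] [Nonempty X] [Nonempty Z] [Nonempty Y]
    (qU : U → ℝ) (qX : U → X → ℝ) (qZ : X → Z → ℝ) (qY : Z → U → Y → ℝ)
    (hqU : ∀ u, 0 ≤ qU u) (hqX : ∀ u x, 0 ≤ qX u x)
    (hqZ : ∀ x z, 0 ≤ qZ x z) (hqY : ∀ z u y, 0 ≤ qY z u y)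
    (hUsum : ∑ u, qU u = 1)
    (hXsum : ∀ u, ∑ x, qX u x = 1)
    (hZsum : ∀ x, ∑ z, qZ x z = 1)
    (hYsum : ∀ z u, ∑ y, qY z u y = 1)
    (hpos : ∀ (x' : X) (z : Z), 0 < ∑ u, ∑ y', qU u * qX u x' * qZ x' z * qY z u y')
    (x : X) (y : Y) :
    (∑ z, ∑ u, qU u * qZ x z * qY z u y) =
      ∑ z, ((∑ u, ∑ y', qU u * qX u x * qZ x z * qY z u y') /
              (∑ u, ∑ z', ∑ y', qU u * qX u x * qZ x z' * qY z' u y')) *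
        ∑ x', ((∑ u, qU u * qX u x' * qZ x' z * qY z u y) /
                 (∑ u, ∑ y', qU u * qX u x' * qZ x' z * qY z u y')) *
          (∑ u, ∑ z', ∑ y', qU u * qX u x' * qZ x' z' * qY z' u y') :=
  front_door_formula_general qU qX qZ qY hXsum hZsum hYsum hpos x y
end

section
/- In the graph U → X → Z → Y with confounder U → Y (U unobserved), intervening on X has the same effect on Z as observing X: for every x with P(X = x) > 0 and every z, P(z | do(x)) := Σ_{u,y} qU(u) · qZ(x, z) · qY(z, u, y) equals P(Z = z | X = x), the conditional probability computed from the joint distribution. -/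
/-!
Summing out `Y` removes `qY`; the observational joint of `(X, Z)` then factors as
`qZ x z · P(X = x)`, so conditioning on `X = x` leaves exactly `qZ x z`, which is also what
the truncated factorization gives once `qU` is summed out.
-/

theorem sum_sum_mul_eq_sum_of_sum_eq_one {ι κ : Type*} [Fintype ι] [Fintype κ]
    (c : ι → ℝ) (k : ι → κ → ℝ) (hk : ∀ i, ∑ j, k i j = 1) :
    ∑ i, ∑ j, c i * k i j = ∑ i, c i := by
  simp only [← Finset.mul_sum, hk, mul_one]

theorem intervention_equals_observation_on_Z_general
    {U X Z Y : Type*} [Fintype U] [Fintype X] [Fintype Z] [Fintype Y]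
    (qU : U → ℝ) (qX : U → X → ℝ) (qZ : X → Z → ℝ) (qY : Z → U → Y → ℝ)
    (hUsum : ∑ u, qU u = 1)
    (hZsum : ∀ x, ∑ z, qZ x z = 1)
    (hYsum : ∀ z u, ∑ y, qY z u y = 1)
    (x : X) (hx : 0 < ∑ u, ∑ z', ∑ y', qU u * qX u x * qZ x z' * qY z' u y')
    (z : Z) :
    (∑ u, ∑ y, qU u * qZ x z * qY z u y) =
      (∑ u, ∑ y', qU u * qX u x * qZ x z * qY z u y') /
        (∑ u, ∑ z', ∑ y', qU u * qX u x * qZ x z' * qY z' u y') := by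
  set pX := ∑ u, qU u * qX u x
  have interventional : ∑ u, ∑ y, qU u * qZ x z * qY z u y = qZ x z := by
    rw [sum_sum_mul_eq_sum_of_sum_eq_one _ _ (hYsum z), ← Finset.sum_mul, hUsum, one_mul]
  have joint : ∀ z', ∑ u, ∑ y', qU u * qX u x * qZ x z' * qY z' u y' = qZ x z' * pX := by
    intro z'
    rw [sum_sum_mul_eq_sum_of_sum_eq_one _ _ (hYsum z'), ← Finset.sum_mul, mul_comm]
  have marginal : ∑ u, ∑ z', ∑ y', qU u * qX u x * qZ x z' * qY z' u y' = pX := by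
    rw [Finset.sum_comm]
    simp only [joint, ← Finset.sum_mul, hZsum, one_mul]
  rw [marginal] at hx ⊢
  rw [interventional, joint, mul_div_cancel_right₀ _ hx.ne']

/-- In the graph `U → X → Z → Y` with confounder `U → Y` (`U` unobserved), joint
distribution `p(u,x,z,y) = qU u * qX u x * qZ x z * qY z u y`, intervening on `X` has
the same effect on `Z` as observing `X`: if `P(X = x) > 0`, then
`P(z | do(x)) = Σ_{u,y} qU u * qZ x z * qY z u y` equals `P(Z = z | X = x)`. -/
theorem intervention_equals_observation_on_Z
    {U X Z Y : Type*} [Fintype U] [Fintype X] [Fintype Z] [Fintype Y]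
    [Nonempty U] [Nonempty X] [Nonempty Z] [Nonempty Y]
    (qU : U → ℝ) (qX : U → X → ℝ) (qZ : X → Z → ℝ) (qY : Z → U → Y → ℝ)
    (hqU : ∀ u, 0 ≤ qU u) (hqX : ∀ u x, 0 ≤ qX u x)
    (hqZ : ∀ x z, 0 ≤ qZ x z) (hqY : ∀ z u y, 0 ≤ qY z u y)
    (hUsum : ∑ u, qU u = 1)
    (hXsum : ∀ u, ∑ x, qX u x = 1)
    (hZsum : ∀ x, ∑ z, qZ x z = 1)
    (hYsum : ∀ z u, ∑ y, qY z u y = 1)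
    (x : X) (hx : 0 < ∑ u, ∑ z', ∑ y', qU u * qX u x * qZ x z' * qY z' u y')
    (z : Z) :
    (∑ u, ∑ y, qU u * qZ x z * qY z u y) =
      (∑ u, ∑ y', qU u * qX u x * qZ x z * qY z u y') /
        (∑ u, ∑ z', ∑ y', qU u * qX u x * qZ x z' * qY z' u y') :=
  intervention_equals_observation_on_Z_general qU qX qZ qY hUsum hZsum hYsum x hx z
end

section
/- In the graph U → X → Z → Y with confounder U → Y (U unobserved), assuming P(X = x', Z = z) > 0 for all x', the interventional probability P(y | do(z)) := Σ_{u,x} qU(u) · qX(u, x) · qY(z, u, y) equals Σ_{x'} P(Y = y | X = x', Z = z) · P(X = x'), where the probabilities on the right are marginals and ratios of marginals of the joint distribution over the observed variables. -/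
/-!
Every observed quantity is a marginal of `qU u * qX u x * qZ x z * qY z u y`, and summing out a
variable whose kernel is normalised removes that kernel. Hence `P(X = x', Z = z)` and
`P(Y = y, X = x', Z = z)` share the factor `qZ x' z`, which cancels in the conditional, and
`P(X = x')` cancels the remaining denominator `∑ u, qU u * qX u x'`. What is left is
`∑ u, qU u * qX u x' * qY z u y`, whose sum over `x'` is the truncated factorisation.
-/

open Finset

theorem sum_sum_mul_of_sum_eq_one {ι κ : Type*} [Fintype κ] (s : Finset ι) (f : ι → ℝ)
    (g : ι → κ → ℝ) (hg : ∀ i, ∑ j, g i j = 1) :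
    ∑ i ∈ s, ∑ j, f i * g i j = ∑ i ∈ s, f i := by
  simp only [← mul_sum, hg, mul_one]

section Marginals

variable {U X Z Y : Type*} [Fintype U]
  (qU : U → ℝ) (qX : U → X → ℝ) (qZ : X → Z → ℝ) (qY : Z → U → Y → ℝ)

theorem sum_joint_eq_qZ_mul (x : X) (z : Z) (y : Y) :
    ∑ u, qU u * qX u x * qZ x z * qY z u y = qZ x z * ∑ u, qU u * qX u x * qY z u y := by
  rw [mul_sum]
  exact sum_congr rfl fun u _ => by ring

theorem sum_joint_over_Y [Fintype Y] (x : X) (z : Z) (hY : ∀ u, ∑ y, qY z u y = 1) :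
    ∑ u, ∑ y, qU u * qX u x * qZ x z * qY z u y = qZ x z * ∑ u, qU u * qX u x := by
  rw [sum_sum_mul_of_sum_eq_one _ _ _ hY, mul_sum]
  exact sum_congr rfl fun u _ => by ring

theorem sum_joint_over_ZY [Fintype Z] [Fintype Y] (hZ : ∀ x, ∑ z, qZ x z = 1)
    (hY : ∀ z u, ∑ y, qY z u y = 1) (x : X) :
    ∑ u, ∑ z, ∑ y, qU u * qX u x * qZ x z * qY z u y = ∑ u, qU u * qX u x := by
  refine sum_congr rfl fun u _ => ?_
  rw [sum_sum_mul_of_sum_eq_one _ _ (fun z => qY z u) fun z => hY z u, ← mul_sum, hZ, mul_one]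

end Marginals

theorem do_z_adjustment_general
    {U X Z Y : Type*} [Fintype U] [Fintype X] [Fintype Z] [Fintype Y]
    (qU : U → ℝ) (qX : U → X → ℝ) (qZ : X → Z → ℝ) (qY : Z → U → Y → ℝ)
    (hZsum : ∀ x, ∑ z, qZ x z = 1)
    (hYsum : ∀ z u, ∑ y, qY z u y = 1)
    (z : Z) (hz : ∀ x', 0 < ∑ u, ∑ y', qU u * qX u x' * qZ x' z * qY z u y')
    (y : Y) :
    (∑ u, ∑ x, qU u * qX u x * qY z u y) =
      ∑ x', ((∑ u, qU u * qX u x' * qZ x' z * qY z u y) /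
               (∑ u, ∑ y', qU u * qX u x' * qZ x' z * qY z u y')) *
        (∑ u, ∑ z', ∑ y', qU u * qX u x' * qZ x' z' * qY z' u y') := by
  rw [sum_comm]
  refine sum_congr rfl fun x' _ => ?_
  have hPXZ_ne := (hz x').ne'
  rw [sum_joint_over_Y qU qX qZ qY x' z (hYsum z)] at hPXZ_ne ⊢
  obtain ⟨hqZ_ne, hPX_ne⟩ := mul_ne_zero_iff.mp hPXZ_ne
  rw [sum_joint_eq_qZ_mul, sum_joint_over_ZY qU qX qZ qY hZsum hYsum,
    mul_div_mul_left _ _ hqZ_ne, div_mul_cancel₀ _ hPX_ne]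

/-- In the graph `U → X → Z → Y` with confounder `U → Y` (`U` unobserved), joint
distribution `p(u,x,z,y) = qU u * qX u x * qZ x z * qY z u y`, assuming
`P(X = x', Z = z) > 0` for all `x'`, the interventional probability
`P(y | do(z)) = Σ_{u,x} qU u * qX u x * qY z u y` equals
`Σ_{x'} P(Y = y | X = x', Z = z) * P(X = x')`. -/
theorem do_z_adjustment
    {U X Z Y : Type*} [Fintype U] [Fintype X] [Fintype Z] [Fintype Y]
    [Nonempty U] [Nonempty X] [Nonempty Z] [Nonempty Y]
    (qU : U → ℝ) (qX : U → X → ℝ) (qZ : X → Z → ℝ) (qY : Z → U → Y → ℝ)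
    (hqU : ∀ u, 0 ≤ qU u) (hqX : ∀ u x, 0 ≤ qX u x)
    (hqZ : ∀ x z, 0 ≤ qZ x z) (hqY : ∀ z u y, 0 ≤ qY z u y)
    (hUsum : ∑ u, qU u = 1)
    (hXsum : ∀ u, ∑ x, qX u x = 1)
    (hZsum : ∀ x, ∑ z, qZ x z = 1)
    (hYsum : ∀ z u, ∑ y, qY z u y = 1)
    (z : Z) (hz : ∀ x', 0 < ∑ u, ∑ y', qU u * qX u x' * qZ x' z * qY z u y')
    (y : Y) :
    (∑ u, ∑ x, qU u * qX u x * qY z u y) =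
      ∑ x', ((∑ u, qU u * qX u x' * qZ x' z * qY z u y) /
               (∑ u, ∑ y', qU u * qX u x' * qZ x' z * qY z u y')) *
        (∑ u, ∑ z', ∑ y', qU u * qX u x' * qZ x' z' * qY z' u y') :=
  do_z_adjustment_general qU qX qZ qY hZsum hYsum z hz y
end

section
/- In the graph U → X → Z → Y with confounder U → Y (U unobserved), for every x, z with qZ(x, z) > 0 and every y, the mixed conditional P(y | z, do(x)) := P(z, y | do(x)) / P(z | do(x)) equals P(y | do(z)) := Σ_{u,x'} qU(u) · qX(u, x') · qY(z, u, y). -/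
/-! Summing out `y` in `P(z, y | do(x))` leaves `qZ(x, z)`, so the mixed conditional is
`Σ_u qU(u) qY(z, u, y)`: conditioning on `z` removes the factor `qZ(x, z)` and `U` keeps its prior.
Summing out `x'` in `P(y | do(z))` gives the same sum, since `qX(u, ·)` has total mass one. -/

section StochasticKernel

variable {ι κ : Type*} [Fintype ι] [Fintype κ]

theorem sum_mul_mul_of_sum_eq_one {k : κ → ℝ} (hk : ∑ j, k j = 1) (a b : ℝ) :
    ∑ j, a * k j * b = a * b := by
  rw [← Finset.sum_mul, ← Finset.mul_sum, hk, mul_one]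

theorem sum_sum_mul_of_sum_eq_one_s10 (w : ι → ℝ) {k : ι → κ → ℝ} (hk : ∀ i, ∑ j, k i j = 1) :
    ∑ j, ∑ i, w i * k i j = ∑ i, w i := by
  rw [Finset.sum_comm]
  exact Finset.sum_congr rfl fun i _ => by rw [← Finset.mul_sum, hk i, mul_one]

end StochasticKernel

theorem mixed_conditional_equals_do_z_general
    {U X Z Y : Type*} [Fintype U] [Fintype X] [Fintype Z] [Fintype Y]
    (qU : U → ℝ) (qX : U → X → ℝ) (qZ : X → Z → ℝ) (qY : Z → U → Y → ℝ)
    (hUsum : ∑ u, qU u = 1)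
    (hXsum : ∀ u, ∑ x, qX u x = 1)
    (hYsum : ∀ z u, ∑ y, qY z u y = 1)
    (x : X) (z : Z) (hz : 0 < qZ x z) (y : Y) :
    (∑ u, qU u * qZ x z * qY z u y) /
        (∑ y', ∑ u, qU u * qZ x z * qY z u y') =
      ∑ u, ∑ x', qU u * qX u x' * qY z u y := by
  have hden : ∑ y', ∑ u, qU u * qZ x z * qY z u y' = qZ x z := by
    rw [sum_sum_mul_of_sum_eq_one_s10 _ (hYsum z), ← Finset.sum_mul, hUsum, one_mul]
  have hnum : ∑ u, qU u * qZ x z * qY z u y = qZ x z * ∑ u, qU u * qY z u y := by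
    rw [Finset.mul_sum]
    exact Finset.sum_congr rfl fun u _ => by ring
  have hdoZ : ∑ u, ∑ x', qU u * qX u x' * qY z u y = ∑ u, qU u * qY z u y :=
    Finset.sum_congr rfl fun u _ => sum_mul_mul_of_sum_eq_one (hXsum u) _ _
  rw [hden, hnum, hdoZ, mul_div_cancel_left₀ _ hz.ne']

/-- In the graph `U → X → Z → Y` with confounder `U → Y` (`U` unobserved), for every
`x`, `z` with `qZ x z > 0` and every `y`, the mixed conditional
`P(y | z, do(x)) = P(z, y | do(x)) / P(z | do(x))` equals
`P(y | do(z)) = Σ_{u,x'} qU u * qX u x' * qY z u y`. -/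
theorem mixed_conditional_equals_do_z
    {U X Z Y : Type*} [Fintype U] [Fintype X] [Fintype Z] [Fintype Y]
    [Nonempty U] [Nonempty X] [Nonempty Z] [Nonempty Y]
    (qU : U → ℝ) (qX : U → X → ℝ) (qZ : X → Z → ℝ) (qY : Z → U → Y → ℝ)
    (hqU : ∀ u, 0 ≤ qU u) (hqX : ∀ u x, 0 ≤ qX u x)
    (hqZ : ∀ x z, 0 ≤ qZ x z) (hqY : ∀ z u y, 0 ≤ qY z u y)
    (hUsum : ∑ u, qU u = 1)
    (hXsum : ∀ u, ∑ x, qX u x = 1)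
    (hZsum : ∀ x, ∑ z, qZ x z = 1)
    (hYsum : ∀ z u, ∑ y, qY z u y = 1)
    (x : X) (z : Z) (hz : 0 < qZ x z) (y : Y) :
    (∑ u, qU u * qZ x z * qY z u y) /
        (∑ y', ∑ u, qU u * qZ x z * qY z u y') =
      ∑ u, ∑ x', qU u * qX u x' * qY z u y :=
  mixed_conditional_equals_do_z_general qU qX qZ qY hUsum hXsum hYsum x z hz y
end

section
/- Non-identifiability of the bow graph: there exist two functional causal models for the graph X → Y with an unobserved confounder U → X, U → Y — that is, two triples (qU, qX, qY) and (qU', qX', qY') of nonnegative kernels on finite types, each with the appropriate sums equal to 1 — whose observational joint distributions over (X, Y) agree, i.e. Σ_u qU(u)·qX(u,x)·qY(u,x,y) = Σ_u qU'(u)·qX'(u,x)·qY'(u,x,y) for all x, y, but whose interventional distributions differ: Σ_u qU(u)·qY(u,x,y) ≠ Σ_u qU'(u)·qY'(u,x,y) for some x, y. In particular the causal effect of X on Y is not identifiable from the observational distribution in this graph. -/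
/-!
Take `U = X = Y` a finite type with at least two elements and `U` uniform in two models: in the
first, `X` is uniform and independent of `U` and `Y := X`; in the second, `X := U` and `Y := U`.
Both make `X` uniform with `Y = X`, so the observational laws agree, yet `P(Y = x | do(x))` is `1`
in the first model and `1 / |U|` in the second, where `Y` does not listen to `X` at all.
-/

noncomputable def uniformWeight (α : Type*) [Fintype α] : α → ℝ :=
  fun _ => (Fintype.card α : ℝ)⁻¹

section Uniform

variable {α : Type*} [Fintype α]

lemma uniformWeight_nonneg (a : α) : 0 ≤ uniformWeight α a := by
  unfold uniformWeight; positivity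

lemma sum_uniformWeight [Nonempty α] : ∑ a, uniformWeight α a = 1 := by
  simp [uniformWeight]

end Uniform

structure BowModel (U X Y : Type*) [Fintype U] [Fintype X] [Fintype Y] where
  qU : U → ℝ
  qX : U → X → ℝ
  qY : U → X → Y → ℝ
  qU_nonneg : ∀ u, 0 ≤ qU u
  qX_nonneg : ∀ u x, 0 ≤ qX u x
  qY_nonneg : ∀ u x y, 0 ≤ qY u x y
  sum_qU : ∑ u, qU u = 1
  sum_qX : ∀ u, ∑ x, qX u x = 1
  sum_qY : ∀ u x, ∑ y, qY u x y = 1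

namespace BowModel

section Distributions

variable {U X Y : Type*} [Fintype U] [Fintype X] [Fintype Y]

def observational (M : BowModel U X Y) (x : X) (y : Y) : ℝ :=
  ∑ u, M.qU u * M.qX u x * M.qY u x y

def interventional (M : BowModel U X Y) (x : X) (y : Y) : ℝ :=
  ∑ u, M.qU u * M.qY u x y

end Distributions

section Models

variable (α : Type*) [Fintype α] [DecidableEq α] [Nonempty α]

noncomputable def unconfounded : BowModel α α α where
  qU := uniformWeight α
  qX _ := uniformWeight α
  qY _ x := Pi.single x 1
  qU_nonneg := uniformWeight_nonneg
  qX_nonneg _ := uniformWeight_nonneg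
  qY_nonneg _ x := (Pi.single_nonneg.mpr zero_le_one : (0 : α → ℝ) ≤ Pi.single x 1)
  sum_qU := sum_uniformWeight
  sum_qX _ := sum_uniformWeight
  sum_qY _ _ := by simp

noncomputable def confounded : BowModel α α α where
  qU := uniformWeight α
  qX u := Pi.single u 1
  qY u _ := Pi.single u 1
  qU_nonneg := uniformWeight_nonneg
  qX_nonneg u := (Pi.single_nonneg.mpr zero_le_one : (0 : α → ℝ) ≤ Pi.single u 1)
  qY_nonneg u _ := (Pi.single_nonneg.mpr zero_le_one : (0 : α → ℝ) ≤ Pi.single u 1)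
  sum_qU := sum_uniformWeight
  sum_qX _ := by simp
  sum_qY _ _ := by simp

variable {α}

lemma observational_unconfounded (x y : α) :
    (unconfounded α).observational x y = (Fintype.card α : ℝ)⁻¹ * (Pi.single x 1 : α → ℝ) y := by
  simp only [observational, unconfounded, uniformWeight, Finset.sum_const, Finset.card_univ,
    nsmul_eq_mul]
  field_simp

lemma observational_confounded (x y : α) :
    (confounded α).observational x y = (Fintype.card α : ℝ)⁻¹ * (Pi.single x 1 : α → ℝ) y := by
  simp [observational, confounded, uniformWeight, Pi.single_apply, eq_comm (a := x)]

lemma interventional_unconfounded (x y : α) :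
    (unconfounded α).interventional x y = (Pi.single x 1 : α → ℝ) y := by
  simp [interventional, unconfounded, uniformWeight]

lemma interventional_confounded (x y : α) :
    (confounded α).interventional x y = (Fintype.card α : ℝ)⁻¹ := by
  simp [interventional, confounded, uniformWeight, Pi.single_apply]

lemma observational_unconfounded_eq_confounded :
    (unconfounded α).observational = (confounded α).observational := by
  ext x y
  rw [observational_unconfounded, observational_confounded]

end Models

lemma interventional_unconfounded_ne_confounded {α : Type*} [Fintype α] [DecidableEq α]
    [Nontrivial α] : (unconfounded α).interventional ≠ (confounded α).interventional := by
  intro h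
  obtain ⟨x⟩ := Nontrivial.to_nonempty (α := α)
  have hx := congrFun₂ h x x
  rw [interventional_unconfounded, interventional_confounded, Pi.single_eq_same] at hx
  have hcard : (1 : ℝ) < Fintype.card α := by exact_mod_cast Fintype.one_lt_card
  exact (inv_lt_one_of_one_lt₀ hcard).ne hx.symm

end BowModel

/-- Non-identifiability of the bow graph `X → Y` with unobserved confounder
`U → X`, `U → Y`: there exist two functional causal models whose observational
distributions over `(X, Y)` agree but whose interventional distributions
`P(y | do(x))` differ. -/
theorem bow_graph_not_identifiable :
    ∃ (qU qU' : Bool → ℝ) (qX qX' : Bool → Bool → ℝ)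
      (qY qY' : Bool → Bool → Bool → ℝ),
      (∀ u, 0 ≤ qU u) ∧ (∀ u x, 0 ≤ qX u x) ∧ (∀ u x y, 0 ≤ qY u x y) ∧
      (∀ u, 0 ≤ qU' u) ∧ (∀ u x, 0 ≤ qX' u x) ∧ (∀ u x y, 0 ≤ qY' u x y) ∧
      (∑ u, qU u = 1) ∧ (∀ u, ∑ x, qX u x = 1) ∧ (∀ u x, ∑ y, qY u x y = 1) ∧
      (∑ u, qU' u = 1) ∧ (∀ u, ∑ x, qX' u x = 1) ∧ (∀ u x, ∑ y, qY' u x y = 1) ∧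
      (∀ x y, ∑ u, qU u * qX u x * qY u x y = ∑ u, qU' u * qX' u x * qY' u x y) ∧
      (∃ x y, ∑ u, qU u * qY u x y ≠ ∑ u, qU' u * qY' u x y) := by
  let M := BowModel.unconfounded Bool
  let M' := BowModel.confounded Bool
  obtain ⟨x, hx⟩ :=
    Function.ne_iff.mp (BowModel.interventional_unconfounded_ne_confounded (α := Bool))
  obtain ⟨y, hxy⟩ := Function.ne_iff.mp hx
  exact ⟨M.qU, M'.qU, M.qX, M'.qX, M.qY, M'.qY,
    M.qU_nonneg, M.qX_nonneg, M.qY_nonneg, M'.qU_nonneg, M'.qX_nonneg, M'.qY_nonneg,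
    M.sum_qU, M.sum_qX, M.sum_qY, M'.sum_qU, M'.sum_qX, M'.sum_qY,
    congrFun₂ BowModel.observational_unconfounded_eq_confounded, x, y, hxy⟩
end

section
/- Non-identifiability of the pricing graph: there exist two functional causal models for the graph with edges U → X, U → Z, X → Z, X → Y, Z → Y and U unobserved — that is, two quadruples (qU, qX, qZ, qY) and (qU', qX', qZ', qY') of nonnegative kernels on finite types, each with the appropriate sums equal to 1 — whose observational joint distributions over (X, Z, Y) agree, i.e. Σ_u qU(u)·qX(u,x)·qZ(u,x,z)·qY(x,z,y) = Σ_u qU'(u)·qX'(u,x)·qZ'(u,x,z)·qY'(x,z,y) for all x, z, y, but whose interventional distributions differ: Σ_{u,z} qU(u)·qZ(u,x,z)·qY(x,z,y) ≠ Σ_{u,z} qU'(u)·qZ'(u,x,z)·qY'(x,z,y) for some x, y. In particular the causal effect of X on Y is not identifiable from the observational distribution in this graph. -/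
/-!
Let `U` be a fair coin, let `X` copy `U` and `Y` copy `Z`. If `Z` copies `U` or if `Z` copies
`X`, the observational laws coincide, because `X = U` almost surely. Intervening on `X` breaks
that coupling: under `do(x)` the first model still has `Y = U`, a fair coin, whereas the second
has `Y = x`.
-/

open Finset

namespace PricingGraph

section Kernels

variable {α β γ δ : Type*} [Fintype α]

def observational (qU : α → ℝ) (qX : α → β → ℝ) (qZ : α → β → γ → ℝ) (qY : β → γ → δ → ℝ)
    (x : β) (z : γ) (y : δ) : ℝ :=
  ∑ u, qU u * qX u x * qZ u x z * qY x z y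

def interventional [Fintype γ] (qU : α → ℝ) (qZ : α → β → γ → ℝ) (qY : β → γ → δ → ℝ)
    (x : β) (y : δ) : ℝ :=
  ∑ u, ∑ z, qU u * qZ u x z * qY x z y

end Kernels

variable {α : Type*} [DecidableEq α]

def dirac (a b : α) : ℝ := if b = a then 1 else 0

lemma dirac_nonneg (a b : α) : 0 ≤ dirac a b := by
  unfold dirac; split_ifs <;> norm_num

lemma dirac_mul_dirac_eq (u x z : α) : dirac u x * dirac u z = dirac u x * dirac x z := by
  by_cases hx : x = u
  · rw [hx]
  · simp [dirac, hx]

variable [Fintype α]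

lemma sum_dirac (a : α) : ∑ b, dirac a b = 1 := by
  simp [dirac]

lemma sum_mul_dirac (f : α → ℝ) (a : α) : ∑ b, f b * dirac b a = f a := by
  simp [dirac]

lemma sum_dirac_mul_dirac (a c : α) : ∑ b, dirac a b * dirac b c = dirac a c := by
  simp [dirac]

lemma observational_copy_confounder_eq_copy_treatment (qU : α → ℝ) (qY : α → α → α → ℝ)
    (x z y : α) :
    observational qU dirac (fun u _ => dirac u) qY x z y =
      observational qU dirac (fun _ x => dirac x) qY x z y :=
  sum_congr rfl fun u _ => by rw [mul_assoc (qU u), dirac_mul_dirac_eq, ← mul_assoc]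

lemma interventional_copy_confounder (qU : α → ℝ) (x y : α) :
    interventional qU (fun u _ => dirac u) (fun _ => dirac) x y = qU y := by
  simp_rw [interventional, mul_assoc, ← mul_sum, sum_dirac_mul_dirac, sum_mul_dirac]

lemma interventional_copy_treatment (qU : α → ℝ) (x y : α) :
    interventional qU (fun _ x => dirac x) (fun _ => dirac) x y = (∑ u, qU u) * dirac x y := by
  simp_rw [interventional, mul_assoc, ← mul_sum, sum_dirac_mul_dirac, sum_mul]

end PricingGraph

open PricingGraph in
/-- Non-identifiability of the pricing graph with edges `U → X`, `U → Z`, `X → Z`,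
`X → Y`, `Z → Y` and `U` unobserved: there exist two functional causal models whose
observational distributions over `(X, Z, Y)` agree but whose interventional
distributions `P(y | do(x))` differ. -/
theorem pricing_graph_not_identifiable :
    ∃ (qU qU' : Bool → ℝ) (qX qX' : Bool → Bool → ℝ)
      (qZ qZ' : Bool → Bool → Bool → ℝ) (qY qY' : Bool → Bool → Bool → ℝ),
      (∀ u, 0 ≤ qU u) ∧ (∀ u x, 0 ≤ qX u x) ∧
      (∀ u x z, 0 ≤ qZ u x z) ∧ (∀ x z y, 0 ≤ qY x z y) ∧
      (∀ u, 0 ≤ qU' u) ∧ (∀ u x, 0 ≤ qX' u x) ∧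
      (∀ u x z, 0 ≤ qZ' u x z) ∧ (∀ x z y, 0 ≤ qY' x z y) ∧
      (∑ u, qU u = 1) ∧ (∀ u, ∑ x, qX u x = 1) ∧
      (∀ u x, ∑ z, qZ u x z = 1) ∧ (∀ x z, ∑ y, qY x z y = 1) ∧
      (∑ u, qU' u = 1) ∧ (∀ u, ∑ x, qX' u x = 1) ∧
      (∀ u x, ∑ z, qZ' u x z = 1) ∧ (∀ x z, ∑ y, qY' x z y = 1) ∧
      (∀ x z y, ∑ u, qU u * qX u x * qZ u x z * qY x z y =
        ∑ u, qU' u * qX' u x * qZ' u x z * qY' x z y) ∧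
      (∃ x y, (∑ u, ∑ z, qU u * qZ u x z * qY x z y) ≠
        ∑ u, ∑ z, qU' u * qZ' u x z * qY' x z y) := by
  have fair_coin : ∑ _u : Bool, (1 / 2 : ℝ) = 1 := by norm_num
  refine ⟨fun _ => 1 / 2, fun _ => 1 / 2, dirac, dirac, fun u _ => dirac u, fun _ x => dirac x,
    fun _ => dirac, fun _ => dirac,
    fun _ => by norm_num, dirac_nonneg, fun u _ => dirac_nonneg u, fun _ => dirac_nonneg,
    fun _ => by norm_num, dirac_nonneg, fun _ => dirac_nonneg, fun _ => dirac_nonneg,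
    fair_coin, sum_dirac, fun u _ => sum_dirac u, fun _ => sum_dirac,
    fair_coin, sum_dirac, fun _ => sum_dirac, fun _ => sum_dirac,
    observational_copy_confounder_eq_copy_treatment _ _, true, false, ?_⟩
  change interventional _ (fun u _ => dirac u) (fun _ => dirac) true false ≠
    interventional _ (fun _ x => dirac x) (fun _ => dirac) true false
  rw [interventional_copy_confounder, interventional_copy_treatment, fair_coin]
  norm_num [dirac]
end
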